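/- arXiv:2504.11719 — 4 statements merged into one kernel-verified Lean document; each statement's English description precedes it below -/
import Mathlib

section
/- Let λ ≥ 1 and let s, s′ > 0 satisfy ḡ(s′) = λ·ḡ(s). Then λ^{1/(q−1)}·s ≤ s′ ≤ λ^{1/(p−1)}·s. -/
open Real

/-- `ḡ(t) = G(t)/t = t^(p-1)/p + t^(q-1)/q` (for `t > 0`) -/
noncomputable def gbar (p q t : ℝ) : ℝ := t ^ (p - 1) / p + t ^ (q - 1) / q

lemma gbar_lt (p q a b : ℝ) (hp : 1 < p) (hpq : p ≤ q) (ha : 0 < a) (hab : a < b) :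
    gbar p q a < gbar p q b := by
  have hp1 : (0:ℝ) < p - 1 := by linarith
  have hq1 : (0:ℝ) < q - 1 := by linarith
  have h1 : a ^ (p - 1) < b ^ (p - 1) := Real.rpow_lt_rpow ha.le hab hp1
  have h2 : a ^ (q - 1) < b ^ (q - 1) := Real.rpow_lt_rpow ha.le hab hq1
  have hpp : (0:ℝ) < p := by linarith
  have hqq : (0:ℝ) < q := by linarith
  unfold gbar
  gcongr

lemma gbar_le_of_le (p q a b : ℝ) (hp : 1 < p) (hpq : p ≤ q) (ha : 0 < a) (hb : 0 < b)
    (h : gbar p q a ≤ gbar p q b) : a ≤ b := by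
  by_contra hc
  push_neg at hc
  exact absurd h (not_le.mpr (gbar_lt p q b a hp hpq hb hc))

lemma gbar_scale (p q lam s : ℝ) (hlam : 0 < lam) (hs : 0 < s) (e : ℝ) :
    gbar p q (lam ^ e * s) =
      lam ^ (e * (p - 1)) * (s ^ (p - 1) / p) + lam ^ (e * (q - 1)) * (s ^ (q - 1) / q) := by
  unfold gbar
  rw [Real.mul_rpow (Real.rpow_nonneg hlam.le e) hs.le,
      Real.mul_rpow (Real.rpow_nonneg hlam.le e) hs.le,
      ← Real.rpow_mul hlam.le, ← Real.rpow_mul hlam.le]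
  ring

/-- If `λ ≥ 1`, `s, s′ > 0` and `ḡ(s′) = λ·ḡ(s)`, then
`λ^(1/(q−1))·s ≤ s′ ≤ λ^(1/(p−1))·s`. -/
theorem stmt4 (p q : ℝ) (hp : 1 < p) (hpq : p ≤ q)
    (lam s s' : ℝ) (hlam : 1 ≤ lam) (hs : 0 < s) (hs' : 0 < s')
    (h : gbar p q s' = lam * gbar p q s) :
    lam ^ (1 / (q - 1)) * s ≤ s' ∧ s' ≤ lam ^ (1 / (p - 1)) * s := by
  have hlam0 : (0:ℝ) < lam := lt_of_lt_of_le one_pos hlam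
  have hp1 : (0:ℝ) < p - 1 := by linarith
  have hq1 : (0:ℝ) < q - 1 := by linarith
  have hpp : (0:ℝ) < p := by linarith
  have hqq : (0:ℝ) < q := by linarith
  have hsp : 0 ≤ s ^ (p - 1) / p := div_nonneg (Real.rpow_nonneg hs.le _) hpp.le
  have hsq : 0 ≤ s ^ (q - 1) / q := div_nonneg (Real.rpow_nonneg hs.le _) hqq.le
  constructor
  · -- lower bound
    have ha : 0 < lam ^ (1 / (q - 1)) * s :=
      mul_pos (Real.rpow_pos_of_pos hlam0 _) hs
    refine gbar_le_of_le p q _ s' hp hpq ha hs' ?_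
    rw [gbar_scale p q lam s hlam0 hs, h]
    have e1 : (1 / (q - 1)) * (q - 1) = 1 := by field_simp
    have e2 : (1 / (q - 1)) * (p - 1) ≤ 1 := by
      rw [div_mul_eq_mul_div, one_mul, div_le_one hq1]; linarith
    have h1 : lam ^ ((1 / (q - 1)) * (p - 1)) ≤ lam :=
      (Real.rpow_le_rpow_of_exponent_le hlam e2).trans_eq (Real.rpow_one lam)
    have h2 : lam ^ ((1 / (q - 1)) * (q - 1)) = lam := by rw [e1, Real.rpow_one]
    rw [h2]
    unfold gbar
    nlinarith [mul_le_mul_of_nonneg_right h1 hsp]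
  · -- upper bound
    have ha : 0 < lam ^ (1 / (p - 1)) * s :=
      mul_pos (Real.rpow_pos_of_pos hlam0 _) hs
    refine gbar_le_of_le p q s' _ hp hpq hs' ha ?_
    rw [gbar_scale p q lam s hlam0 hs, h]
    have e1 : (1 / (p - 1)) * (p - 1) = 1 := by field_simp
    have e2 : (1:ℝ) ≤ (1 / (p - 1)) * (q - 1) := by
      rw [div_mul_eq_mul_div, one_mul, le_div_iff₀ hp1]; linarith
    have h1 : lam ≤ lam ^ ((1 / (p - 1)) * (q - 1)) := by
      calc lam = lam ^ (1:ℝ) := (Real.rpow_one lam).symm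
        _ ≤ _ := Real.rpow_le_rpow_of_exponent_le hlam e2
    have h2 : lam ^ ((1 / (p - 1)) * (p - 1)) = lam := by rw [e1, Real.rpow_one]
    rw [h2]
    unfold gbar
    nlinarith [mul_le_mul_of_nonneg_right h1 hsq]
end

section
/- Let λ satisfy 0 < λ ≤ 1 and let s, s′ > 0 satisfy ḡ(s′) = λ·ḡ(s). Then λ^{1/(p−1)}·s ≤ s′ ≤ λ^{1/(q−1)}·s. -/
open Real

lemma gbar_mono (p q : ℝ) (hp : 1 < p) (hpq : p ≤ q) {a b : ℝ} (ha : 0 ≤ a)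
    (hab : a ≤ b) : gbar p q a ≤ gbar p q b := by
  have hp0 : 0 < p := lt_trans one_pos hp
  have hq0 : 0 < q := lt_of_lt_of_le hp0 hpq
  unfold gbar
  gcongr <;> first
    | exact ha
    | exact hab
    | linarith

/-- If `0 < λ ≤ 1`, `s, s′ > 0` and `ḡ(s′) = λ·ḡ(s)`, then
`λ^(1/(p−1))·s ≤ s′ ≤ λ^(1/(q−1))·s`. -/
theorem stmt6 (p q : ℝ) (hp : 1 < p) (hpq : p ≤ q)
    (lam s s' : ℝ) (hlam0 : 0 < lam) (hlam1 : lam ≤ 1) (hs : 0 < s) (hs' : 0 < s')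
    (h : gbar p q s' = lam * gbar p q s) :
    lam ^ (1 / (p - 1)) * s ≤ s' ∧ s' ≤ lam ^ (1 / (q - 1)) * s := by
  have hp1 : (0:ℝ) < p - 1 := by linarith
  have hq1 : (0:ℝ) < q - 1 := by linarith
  have hp0 : (0:ℝ) < p := by linarith
  have hq0 : (0:ℝ) < q := by linarith
  have key : ∀ c e : ℝ, e ≠ 0 →
      (lam ^ (1 / e) * s) ^ c = lam ^ (c / e) * s ^ c := by
    intro c e he
    rw [Real.mul_rpow (Real.rpow_nonneg hlam0.le _) hs.le, ← Real.rpow_mul hlam0.le]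
    congr 2
    field_simp
  have hsp : (0:ℝ) < s ^ (p-1) := Real.rpow_pos_of_pos hs _
  have hsq : (0:ℝ) < s ^ (q-1) := Real.rpow_pos_of_pos hs _
  constructor
  · -- lower bound: gbar (λ^{1/(p-1)} s) ≤ λ gbar s = gbar s'
    have h1 : gbar p q (lam ^ (1 / (p-1)) * s) ≤ gbar p q s' := by
      rw [h]
      unfold gbar
      rw [key _ _ hp1.ne', key _ _ hp1.ne', div_self hp1.ne', Real.rpow_one]
      have hle : lam ^ ((q-1)/(p-1)) ≤ lam := by
        nth_rewrite 2 [← Real.rpow_one lam]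
        exact Real.rpow_le_rpow_of_exponent_ge hlam0 hlam1
          ((one_le_div hp1).mpr (by linarith))
      calc lam * s ^ (p-1) / p + lam ^ ((q-1)/(p-1)) * s ^ (q-1) / q
          ≤ lam * s ^ (p-1) / p + lam * s ^ (q-1) / q := by gcongr
        _ = lam * (s ^ (p-1) / p + s ^ (q-1) / q) := by ring
    by_contra hc
    push_neg at hc
    have := gbar_mono p q hp hpq hs'.le hc.le
    -- strict: need contradiction. gbar strictly mono
    have hstrict : gbar p q s' < gbar p q (lam ^ (1 / (p-1)) * s) := by
      unfold gbar
      have h1 := Real.rpow_lt_rpow hs'.le hc hp1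
      have h2 := Real.rpow_lt_rpow hs'.le hc hq1
      gcongr
    linarith
  · -- upper bound
    have h1 : gbar p q s' ≤ gbar p q (lam ^ (1 / (q-1)) * s) := by
      rw [h]
      unfold gbar
      rw [key _ _ hq1.ne', key _ _ hq1.ne', div_self hq1.ne', Real.rpow_one]
      have hle : lam ≤ lam ^ ((p-1)/(q-1)) := by
        nth_rewrite 1 [← Real.rpow_one lam]
        exact Real.rpow_le_rpow_of_exponent_ge hlam0 hlam1
          ((div_le_one hq1).mpr (by linarith))
      calc lam * (s ^ (p-1) / p + s ^ (q-1) / q)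
          = lam * s ^ (p-1) / p + lam * s ^ (q-1) / q := by ring
        _ ≤ lam ^ ((p-1)/(q-1)) * s ^ (p-1) / p + lam * s ^ (q-1) / q := by gcongr
    by_contra hc
    push_neg at hc
    have hstrict : gbar p q (lam ^ (1 / (q-1)) * s) < gbar p q s' := by
      have hpos : 0 ≤ lam ^ (1 / (q-1)) * s :=
        mul_nonneg (Real.rpow_nonneg hlam0.le _) hs.le
      unfold gbar
      have h1 := Real.rpow_lt_rpow hpos hc hp1
      have h2 := Real.rpow_lt_rpow hpos hc hq1
      gcongr
    linarith
end

section
/- Let δ > 1, λ > 0 and v ≥ 0. Then ḡ( ( ḡ(λ+v)/ḡ(λ) )^{(δ−1)/(q−1)} · (λ+v) ) ≤ ḡ(λ) · ( ḡ(λ+v)/ḡ(λ) )^{δ}. -/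
open Real

/-- For `δ > 1`, `λ > 0`, `v ≥ 0`:
`ḡ( (ḡ(λ+v)/ḡ(λ))^((δ−1)/(q−1)) · (λ+v) ) ≤ ḡ(λ)·(ḡ(λ+v)/ḡ(λ))^δ`. -/
theorem stmt12 (p q δ lam v : ℝ) (hp : 1 < p) (hpq : p ≤ q)
    (hδ : 1 < δ) (hlam : 0 < lam) (hv : 0 ≤ v) :
    gbar p q ((gbar p q (lam + v) / gbar p q lam) ^ ((δ - 1) / (q - 1)) * (lam + v)) ≤
      gbar p q lam * (gbar p q (lam + v) / gbar p q lam) ^ δ := by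
  have hq : 1 < q := lt_of_lt_of_le hp hpq
  have hp0 : 0 < p := by linarith
  have hq0 : 0 < q := by linarith
  have hlv : 0 < lam + v := by linarith
  have hgl : 0 < gbar p q lam := by
    have h1 := rpow_pos_of_pos hlam (p - 1)
    have h2 := rpow_pos_of_pos hlam (q - 1)
    unfold gbar; positivity
  have hmono : gbar p q lam ≤ gbar p q (lam + v) := by
    unfold gbar
    gcongr <;> linarith
  set R := gbar p q (lam + v) / gbar p q lam with hRdef
  have hR1 : 1 ≤ R := (one_le_div hgl).mpr hmono
  have hR0 : 0 < R := lt_of_lt_of_le one_pos hR1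
  have hexp : 0 ≤ (δ - 1) / (q - 1) := by
    apply div_nonneg <;> linarith
  set r := R ^ ((δ - 1) / (q - 1)) with hrdef
  have hr1 : 1 ≤ r := by
    calc (1 : ℝ) = 1 ^ ((δ - 1) / (q - 1)) := (one_rpow _).symm
    _ ≤ r := rpow_le_rpow zero_le_one hR1 hexp
  have hr0 : 0 < r := lt_of_lt_of_le one_pos hr1
  have hpow : r ^ (q - 1) = R ^ (δ - 1) := by
    rw [hrdef, ← Real.rpow_mul hR0.le, div_mul_cancel₀]
    linarith
  calc gbar p q (r * (lam + v))
      = r ^ (p - 1) * (lam + v) ^ (p - 1) / p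
        + r ^ (q - 1) * (lam + v) ^ (q - 1) / q := by
        unfold gbar
        rw [mul_rpow hr0.le hlv.le, mul_rpow hr0.le hlv.le]
    _ ≤ r ^ (q - 1) * (lam + v) ^ (p - 1) / p
        + r ^ (q - 1) * (lam + v) ^ (q - 1) / q := by
        have hA : r ^ (p - 1) ≤ r ^ (q - 1) :=
          rpow_le_rpow_of_exponent_le hr1 (by linarith)
        have hB : (0:ℝ) ≤ (lam + v) ^ (p - 1) := (rpow_pos_of_pos hlv _).le
        gcongr
    _ = r ^ (q - 1) * gbar p q (lam + v) := by unfold gbar; ring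
    _ = R ^ (δ - 1) * (R * gbar p q lam) := by
        rw [hpow, hRdef, div_mul_cancel₀ _ hgl.ne']
    _ = gbar p q lam * R ^ δ := by
        have : R ^ δ = R ^ (δ - 1) * R := by
          rw [← Real.rpow_add_one hR0.ne' (δ - 1)]; ring_nf
        rw [this]; ring
end

section
/- Let n ≥ 1 be an integer, let δ > 1, λ > 0, R > 0 and C₀ > 0. Define Φ : [0,∞) → ℝ by Φ(s) = 1 − ( ḡ(λ)/ḡ(λ+s) )^{(δ−1)/(q−1)}, and let Φ′ denote its derivative. Then there exist constants c₁, c₂ > 0, depending only on p, q, δ and C₀, such that for all v ≥ 0, all η ∈ [0,1], all nonzero vectors ξ ∈ ℝⁿ, and all vectors e ∈ ℝⁿ with ‖e‖ ≤ C₀/R, one has (‖ξ‖^{p−2} + ‖ξ‖^{q−2}) · ⟨ξ, Φ′(v)·(ξ/R)·η^q + q·Φ(v)·η^{q−1}·e⟩ ≥ (c₁/R) · ( ḡ(λ)/ḡ(λ+v) )^{(δ−1)/(q−1)} · ( G(‖ξ‖)/(λ+v) ) · η^q − (c₂/R) · ḡ(λ) · ( ḡ(λ+v)/ḡ(λ)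 )^{δ}. -/
/-!
Write `t = ‖ξ‖`, `s = λ + v` and `a = (ḡ(λ)/ḡ(s))^((δ-1)/(q-1))`, so that the left-hand side is
`(g(t)/t) ⟪ξ, …⟫` with `g(t) = t^(p-1) + t^(q-1)`. Because `s ḡ'(s) ≥ (p-1) ḡ(s)`, the derivative
satisfies `Φ'(v) ≥ (δ-1)/(q-1) (p-1) a / s`, and with `t g(t) ≥ G(t)` the `Φ'` term is at least
`2 c₁ a G(t)/s η^q / R`. The cross term is at least `-q C₀ g(t) η^(q-1) / R`, and half of the good
term absorbs it up to `c₂ ḡ(λ) (ḡ(s)/ḡ(λ))^δ = c₂ ḡ(s) / a^(q-1)`: for `t ≤ s` simply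
`g(t) ≤ g(s) ≤ q ḡ(s)`, while for `t ≥ s` the weighted Young inequality
`x^(q-1) y ≤ E x^q + y^q / E^(q-1)` with `E = c₁ a G(t)/s` reduces the claim to
`g(t)^q ≤ q^q ḡ(s) (G(t)/s)^(q-1)`.
-/

open Real
open scoped RealInnerProductSpace

/-- `G(t) = t^p/p + t^q/q` -/
noncomputable def G (p q t : ℝ) : ℝ := t ^ p / p + t ^ q / q

/-- `Φ(s) = 1 − (ḡ(λ)/ḡ(λ+s))^((δ−1)/(q−1))` -/
noncomputable def Phi (p q δ lam : ℝ) (s : ℝ) : ℝ :=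
  1 - (gbar p q lam / gbar p q (lam + s)) ^ ((δ - 1) / (q - 1))

noncomputable def g (p q t : ℝ) : ℝ := t ^ (p - 1) + t ^ (q - 1)

lemma sub_le_inner_smul_add_smul {E : Type*} [NormedAddCommGroup E] [InnerProductSpace ℝ E]
    (x y : E) {a b : ℝ} (hb : 0 ≤ b) : a * ‖x‖ ^ 2 - b * (‖x‖ * ‖y‖) ≤ ⟪x, a • x + b • y⟫ := by
  rw [inner_add_right, real_inner_smul_right, real_inner_smul_right, real_inner_self_eq_norm_sq]
  have := mul_le_mul_of_nonneg_left (neg_le_of_abs_le (abs_real_inner_le_norm x y)) hb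
  linarith

lemma rpow_sub_one_mul_le_mul_rpow_add {q E x y : ℝ} (hq : 1 ≤ q) (hE : 0 < E) (hx : 0 ≤ x)
    (hy : 0 ≤ y) : x ^ (q - 1) * y ≤ E * x ^ q + y ^ q / E ^ (q - 1) := by
  have hpow (z : ℝ) (hz : 0 ≤ z) : z ^ (q - 1) * z = z ^ q := by
    rw [← Real.rpow_add_one' hz (by linarith), sub_add_cancel]
  rcases le_or_gt y (E * x) with hyx | hxy
  · have : x ^ (q - 1) * y ≤ E * x ^ q :=
      calc x ^ (q - 1) * y ≤ x ^ (q - 1) * (E * x) := by gcongr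
        _ = E * x ^ q := by rw [mul_left_comm, hpow x hx]
    have : 0 ≤ y ^ q / E ^ (q - 1) := by positivity
    linarith
  · have hxy' : x ≤ y / E := (le_div_iff₀ hE).mpr (by linarith)
    have : 0 ≤ E * x ^ q := by positivity
    calc x ^ (q - 1) * y ≤ (y / E) ^ (q - 1) * y := by gcongr
      _ = y ^ q / E ^ (q - 1) := by
        rw [Real.div_rpow hy hE.le, div_mul_eq_mul_div, hpow y hy]
      _ ≤ _ := by linarith

section Profile

variable {p q : ℝ}

lemma gbar_pos (hp : 0 < p) (hq : 0 < q) {t : ℝ} (ht : 0 < t) : 0 < gbar p q t := by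
  unfold gbar; positivity

lemma G_pos (hp : 0 < p) (hq : 0 < q) {t : ℝ} (ht : 0 < t) : 0 < G p q t := by
  unfold G; positivity

lemma g_pos {t : ℝ} (ht : 0 < t) : 0 < g p q t := by
  unfold g; positivity

lemma gbar_le_gbar (hp : 1 ≤ p) (hpq : p ≤ q) {s t : ℝ} (hs : 0 ≤ s) (hst : s ≤ t) :
    gbar p q s ≤ gbar p q t := by
  unfold gbar; gcongr <;> linarith

lemma g_le_g (hp : 1 ≤ p) (hpq : p ≤ q) {s t : ℝ} (hs : 0 ≤ s) (hst : s ≤ t) :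
    g p q s ≤ g p q t := by
  unfold g; gcongr; linarith

lemma g_le_mul_gbar (hp : 0 < p) (hpq : p ≤ q) {s : ℝ} (hs : 0 ≤ s) :
    g p q s ≤ q * gbar p q s := by
  have hq : 0 < q := hp.trans_le hpq
  have h : s ^ (p - 1) ≤ q / p * s ^ (p - 1) :=
    le_mul_of_one_le_left (by positivity) ((one_le_div hp).mpr hpq)
  calc g p q s ≤ q / p * s ^ (p - 1) + s ^ (q - 1) := by unfold g; linarith
    _ = q * gbar p q s := by unfold gbar; field_simp

lemma rpow_sub_two_add_mul_self {t : ℝ} (ht : 0 < t) :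
    (t ^ (p - 2) + t ^ (q - 2)) * t = g p q t := by
  simp only [g, add_mul, ← Real.rpow_add_one ht.ne']
  ring_nf

lemma g_mul_self {t : ℝ} (ht : 0 < t) : g p q t * t = t ^ p + t ^ q := by
  simp only [g, add_mul, ← Real.rpow_add_one ht.ne', sub_add_cancel]

lemma G_le_g_mul_self (hp : 1 ≤ p) (hpq : p ≤ q) {t : ℝ} (ht : 0 < t) :
    G p q t ≤ g p q t * t := by
  rw [g_mul_self ht, G]
  gcongr
  all_goals exact div_le_self (by positivity) (by linarith)

lemma g_mul_self_le_mul_G (hp : 0 < p) (hpq : p ≤ q) {t : ℝ} (ht : 0 < t) :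
    g p q t * t ≤ q * G p q t := by
  have hq : 0 < q := hp.trans_le hpq
  have h : t ^ p ≤ q / p * t ^ p :=
    le_mul_of_one_le_left (by positivity) ((one_le_div hp).mpr hpq)
  calc g p q t * t ≤ q / p * t ^ p + t ^ q := by rw [g_mul_self ht]; linarith
    _ = q * G p q t := by unfold G; field_simp

lemma g_le_div_rpow_mul_g (hpq : p ≤ q) {s t : ℝ} (hs : 0 < s) (hst : s ≤ t) :
    g p q t ≤ (t / s) ^ (q - 1) * g p q s := by
  have hts : 1 ≤ t / s := (one_le_div hs).mpr hst
  have scale : ∀ r : ℝ, t ^ (r - 1) = (t / s) ^ (r - 1) * s ^ (r - 1) := fun r => by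
    rw [Real.div_rpow (hs.le.trans hst) hs.le, div_mul_cancel₀ _ (by positivity)]
  have hmono : (t / s) ^ (p - 1) ≤ (t / s) ^ (q - 1) :=
    Real.rpow_le_rpow_of_exponent_le hts (by linarith)
  rw [g, g, scale p, scale q, mul_add]
  gcongr

lemma g_rpow_le (hp : 0 < p) (hpq : p ≤ q) (hq : 1 ≤ q) {s t : ℝ} (hs : 0 < s)
    (hst : s ≤ t) :
    g p q t ^ q ≤ q ^ q * gbar p q s * (G p q t / s) ^ (q - 1) := by
  have ht : 0 < t := hs.trans_le hst
  have hg : 0 < g p q t := g_pos ht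
  have hgbar : g p q t ≤ q * gbar p q s * (t / s) ^ (q - 1) := by
    calc g p q t ≤ (t / s) ^ (q - 1) * g p q s := g_le_div_rpow_mul_g hpq hs hst
      _ ≤ (t / s) ^ (q - 1) * (q * gbar p q s) := by
          gcongr; exact g_le_mul_gbar hp hpq hs.le
      _ = _ := by ring
  have hG : t / s * g p q t ≤ q * (G p q t / s) := by
    calc t / s * g p q t = g p q t * t / s := by ring
      _ ≤ q * G p q t / s := div_le_div_of_nonneg_right (g_mul_self_le_mul_G hp hpq ht) hs.le
      _ = q * (G p q t / s) := mul_div_assoc _ _ _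
  calc g p q t ^ q = g p q t * g p q t ^ (q - 1) := by
        rw [← Real.rpow_one_add' hg.le (by linarith), add_sub_cancel]
    _ ≤ q * gbar p q s * (t / s) ^ (q - 1) * g p q t ^ (q - 1) := by gcongr
    _ = q * gbar p q s * (t / s * g p q t) ^ (q - 1) := by
        rw [Real.mul_rpow (by positivity) hg.le]; ring
    _ ≤ q * gbar p q s * (q * (G p q t / s)) ^ (q - 1) := by
        have := gbar_pos hp (hp.trans_le hpq) hs
        gcongr
    _ = q ^ q * gbar p q s * (G p q t / s) ^ (q - 1) := by
        have := G_pos hp (hp.trans_le hpq) ht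
        rw [Real.mul_rpow (by linarith) (by positivity), mul_mul_mul_comm, ← mul_assoc,
          ← Real.rpow_one_add' (by linarith) (by linarith), add_sub_cancel]

end Profile

section Phi

variable {p q : ℝ}

lemma hasDerivAt_gbar {t : ℝ} (ht : 0 < t) :
    HasDerivAt (gbar p q) ((p - 1) / p * t ^ (p - 2) + (q - 1) / q * t ^ (q - 2)) t := by
  have hderiv (r : ℝ) :
      HasDerivAt (fun x : ℝ => x ^ (r - 1) / r) ((r - 1) / r * t ^ (r - 2)) t := by
    refine ((Real.hasDerivAt_rpow_const (p := r - 1) (Or.inl ht.ne')).div_const r).congr_deriv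
      ?_
    rw [sub_sub, one_add_one_eq_two]; ring
  exact (hderiv p).add (hderiv q)

lemma sub_one_mul_gbar_le (hpq : p ≤ q) (hq : 0 < q) {t : ℝ} (ht : 0 < t) :
    (p - 1) * gbar p q t ≤ t * ((p - 1) / p * t ^ (p - 2) + (q - 1) / q * t ^ (q - 2)) := by
  have hpow (r : ℝ) : t * t ^ (r - 2) = t ^ (r - 1) := by
    rw [mul_comm, ← Real.rpow_add_one ht.ne']; ring_nf
  have h : (p - 1) * (t ^ (q - 1) / q) ≤ (q - 1) * (t ^ (q - 1) / q) := by gcongr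
  rw [mul_add, mul_left_comm, hpow, mul_left_comm, hpow, gbar, mul_add]
  rw [div_mul_eq_mul_div, mul_div_assoc, div_mul_eq_mul_div (q - 1), mul_div_assoc]
  linarith

lemma hasDerivAt_Phi (hp : 0 < p) (hq : 0 < q) {δ lam v : ℝ} (hlam : 0 < lam)
    (hs : 0 < lam + v) :
    HasDerivAt (Phi p q δ lam)
      ((δ - 1) / (q - 1) * (gbar p q lam / gbar p q (lam + v)) ^ ((δ - 1) / (q - 1)) *
        (((p - 1) / p * (lam + v) ^ (p - 2) + (q - 1) / q * (lam + v) ^ (q - 2)) /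
          gbar p q (lam + v))) v := by
  have hc := gbar_pos hp hq hlam
  have hu := gbar_pos hp hq hs
  have hratio : HasDerivAt (fun s => gbar p q lam / gbar p q (lam + s))
      (-(gbar p q lam) * ((p - 1) / p * (lam + v) ^ (p - 2) + (q - 1) / q * (lam + v) ^ (q - 2)) /
        gbar p q (lam + v) ^ 2) v := by
    refine ((hasDerivAt_const v (gbar p q lam)).div
      ((hasDerivAt_gbar (p := p) (q := q) hs).comp_const_add lam v) hu.ne').congr_deriv ?_
    ring
  refine ((hratio.rpow_const (Or.inl (div_pos hc hu).ne')).const_sub 1).congr_deriv ?_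
  rw [Real.rpow_sub_one (div_pos hc hu).ne']
  field_simp

lemma le_deriv_Phi (hp : 1 ≤ p) (hpq : p ≤ q) {δ lam v : ℝ} (hδ : 1 ≤ δ) (hlam : 0 < lam)
    (hv : 0 ≤ v) :
    (δ - 1) / (q - 1) * (p - 1) * (gbar p q lam / gbar p q (lam + v)) ^ ((δ - 1) / (q - 1)) /
      (lam + v) ≤ deriv (Phi p q δ lam) v := by
  have hs : 0 < lam + v := by linarith
  have hp₀ : 0 < p := by linarith
  have hq : 0 < q := by linarith
  have hc := gbar_pos hp₀ hq hlam
  have hu := gbar_pos hp₀ hq hs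
  have hM : 0 ≤ (δ - 1) / (q - 1) := div_nonneg (by linarith) (by linarith)
  have hratio : (p - 1) / (lam + v) ≤
      ((p - 1) / p * (lam + v) ^ (p - 2) + (q - 1) / q * (lam + v) ^ (q - 2)) /
        gbar p q (lam + v) := by
    rw [div_le_div_iff₀ hs hu, mul_comm _ (lam + v)]
    exact sub_one_mul_gbar_le hpq hq hs
  rw [(hasDerivAt_Phi hp₀ hq hlam hs).deriv, mul_right_comm, mul_div_assoc]
  gcongr

lemma Phi_nonneg (hp : 1 ≤ p) (hpq : p ≤ q) {δ lam v : ℝ} (hδ : 1 ≤ δ) (hlam : 0 < lam)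
    (hv : 0 ≤ v) : 0 ≤ Phi p q δ lam v := by
  have hp₀ : 0 < p := by linarith
  have hq : 0 < q := by linarith
  have hu := gbar_pos hp₀ hq (by linarith : 0 < lam + v)
  have hle : gbar p q lam / gbar p q (lam + v) ≤ 1 :=
    div_le_one_of_le₀ (gbar_le_gbar hp hpq hlam.le (by linarith)) hu.le
  rw [Phi, sub_nonneg]
  exact Real.rpow_le_one (div_nonneg (gbar_pos hp₀ hq hlam).le hu.le) hle
    (div_nonneg (by linarith) (by linarith))

lemma Phi_le_one (hp : 0 < p) (hpq : p ≤ q) {δ lam v : ℝ} (hlam : 0 < lam) (hv : 0 ≤ v) :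
    Phi p q δ lam v ≤ 1 := by
  have hq : 0 < q := hp.trans_le hpq
  have := gbar_pos hp hq hlam
  have := gbar_pos hp hq (by linarith : 0 < lam + v)
  rw [Phi, sub_le_self_iff]
  positivity

end Phi

section Absorption

variable {p q : ℝ}

lemma mul_div_rpow_eq_div_rpow {c u δ q : ℝ} (hc : 0 < c) (hu : 0 < u) (hq : q ≠ 1) :
    c * (u / c) ^ δ = u / ((c / u) ^ ((δ - 1) / (q - 1))) ^ (q - 1) := by
  rw [← Real.rpow_mul (by positivity), div_mul_cancel₀ _ (sub_ne_zero.mpr hq),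
    Real.rpow_sub (by positivity), Real.rpow_one, Real.div_rpow hc.le hu.le,
    Real.div_rpow hu.le hc.le]
  field_simp

lemma mul_g_mul_rpow_sub_one_le (hp : 1 < p) (hpq : p ≤ q) {δ C₀ ε lam s t η : ℝ}
    (hδ : 1 ≤ δ) (hC₀ : 0 ≤ C₀) (hε : 0 < ε) (hlam : 0 < lam) (hs : lam ≤ s) (ht : 0 < t)
    (hη₀ : 0 ≤ η) (hη₁ : η ≤ 1) :
    q * C₀ * g p q t * η ^ (q - 1) ≤
      ε * ((gbar p q lam / gbar p q s) ^ ((δ - 1) / (q - 1)) * (G p q t / s)) * η ^ q +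
        (q ^ 2 * C₀ + (q ^ 2 * C₀) ^ q / ε ^ (q - 1)) *
          (gbar p q lam * (gbar p q s / gbar p q lam) ^ δ) := by
  have hp₀ : 0 < p := by linarith
  have hq : 1 < q := hp.trans_le hpq
  have hq₀ : 0 < q := by linarith
  have hs₀ : 0 < s := hlam.trans_le hs
  set c := gbar p q lam
  set u := gbar p q s
  have hc : 0 < c := gbar_pos hp₀ hq₀ hlam
  have hu : 0 < u := gbar_pos hp₀ hq₀ hs₀
  rw [mul_div_rpow_eq_div_rpow hc hu hq.ne', add_mul]
  set a := (c / u) ^ ((δ - 1) / (q - 1))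
  have ha : 0 < a := by positivity
  have ha₁ : a ^ (q - 1) ≤ 1 :=
    Real.rpow_le_one ha.le (Real.rpow_le_one (by positivity)
      ((div_le_one hu).mpr (gbar_le_gbar hp.le hpq hlam.le hs))
      (div_nonneg (by linarith) (by linarith))) (by linarith)
  have hG := G_pos hp₀ hq₀ ht
  have hK : 0 ≤ ε * (a * (G p q t / s)) * η ^ q := by positivity
  have hu_le : u ≤ u / a ^ (q - 1) := le_div_self hu.le (by positivity) ha₁
  have hZ : 0 ≤ q ^ 2 * C₀ * (u / a ^ (q - 1)) := by positivity
  have hZ' : 0 ≤ (q ^ 2 * C₀) ^ q / ε ^ (q - 1) * (u / a ^ (q - 1)) := by positivity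
  rcases le_total t s with hts | hst
  · have hη : η ^ (q - 1) ≤ 1 := Real.rpow_le_one hη₀ hη₁ (by linarith)
    calc q * C₀ * g p q t * η ^ (q - 1) ≤ q * C₀ * (q * u) * 1 := by
          gcongr
          exact (g_le_g hp.le hpq ht.le hts).trans (g_le_mul_gbar hp₀ hpq hs₀.le)
      _ = q ^ 2 * C₀ * u := by ring
      _ ≤ q ^ 2 * C₀ * (u / a ^ (q - 1)) := by gcongr
      _ ≤ _ := by linarith
  · set E := ε * (a * (G p q t / s))
    have hE : 0 < E := by positivity
    have hg := g_pos (p := p) (q := q) ht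
    have hq2 : (q ^ 2 * C₀) ^ q = q ^ q * (q * C₀) ^ q := by
      rw [sq, mul_assoc, Real.mul_rpow hq₀.le (by positivity)]
    have htail : (q * C₀ * g p q t) ^ q / E ^ (q - 1) ≤
        (q ^ 2 * C₀) ^ q / ε ^ (q - 1) * (u / a ^ (q - 1)) := by
      rw [Real.mul_rpow (by positivity) hg.le, Real.mul_rpow hε.le (by positivity),
        Real.mul_rpow ha.le (by positivity), div_le_iff₀ (by positivity)]
      calc (q * C₀) ^ q * g p q t ^ q
          ≤ (q * C₀) ^ q * (q ^ q * u * (G p q t / s) ^ (q - 1)) := by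
            gcongr; exact g_rpow_le hp₀ hpq hq.le hs₀ hst
        _ = _ := by rw [hq2]; field_simp
    calc q * C₀ * g p q t * η ^ (q - 1) = η ^ (q - 1) * (q * C₀ * g p q t) := by ring
      _ ≤ E * η ^ q + (q * C₀ * g p q t) ^ q / E ^ (q - 1) :=
          rpow_sub_one_mul_le_mul_rpow_add hq.le hE hη₀ (by positivity)
      _ ≤ _ := by linarith

lemma deriv_Phi_mul_sub_Phi_mul_ge (hp : 1 < p) (hpq : p ≤ q) {δ C₀ ε lam v t η : ℝ}
    (hδ : 1 ≤ δ) (hC₀ : 0 ≤ C₀) (hε : 0 < ε) (hεM : 2 * ε ≤ (δ - 1) / (q - 1) * (p - 1))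
    (hlam : 0 < lam) (hv : 0 ≤ v) (ht : 0 < t) (hη₀ : 0 ≤ η) (hη₁ : η ≤ 1) :
    ε * ((gbar p q lam / gbar p q (lam + v)) ^ ((δ - 1) / (q - 1)) * (G p q t / (lam + v))) *
        η ^ q - (q ^ 2 * C₀ + (q ^ 2 * C₀) ^ q / ε ^ (q - 1)) *
          (gbar p q lam * (gbar p q (lam + v) / gbar p q lam) ^ δ) ≤
      deriv (Phi p q δ lam) v * η ^ q * (g p q t * t) -
        q * Phi p q δ lam v * η ^ (q - 1) * C₀ * g p q t := by
  have hp₀ : 0 < p := by linarith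
  have hq₀ : 0 < q := by linarith
  set a := (gbar p q lam / gbar p q (lam + v)) ^ ((δ - 1) / (q - 1))
  have ha : 0 ≤ a := Real.rpow_nonneg (div_nonneg (gbar_pos hp₀ hq₀ hlam).le
    (gbar_pos hp₀ hq₀ (by linarith)).le) _
  have hD : 2 * ε * a / (lam + v) ≤ deriv (Phi p q δ lam) v :=
    le_trans (by gcongr) (le_deriv_Phi hp.le hpq hδ hlam hv)
  have hΦ := Phi_le_one hp₀ hpq (δ := δ) hlam hv
  have hg := g_pos (p := p) (q := q) ht
  have hG := G_pos hp₀ hq₀ ht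
  have hGg := G_le_g_mul_self hp.le hpq ht
  have hmain : 2 * ε * (a * (G p q t / (lam + v))) * η ^ q ≤
      deriv (Phi p q δ lam) v * η ^ q * (g p q t * t) :=
    calc 2 * ε * (a * (G p q t / (lam + v))) * η ^ q
        = 2 * ε * a / (lam + v) * G p q t * η ^ q := by ring
      _ ≤ deriv (Phi p q δ lam) v * (g p q t * t) * η ^ q := by
          gcongr; exact le_trans (by positivity) hD
      _ = _ := by ring
  have hcross : q * Phi p q δ lam v * η ^ (q - 1) * C₀ * g p q t ≤
      q * C₀ * g p q t * η ^ (q - 1) :=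
    calc _ ≤ q * 1 * η ^ (q - 1) * C₀ * g p q t := by gcongr
      _ = _ := by ring
  have hsmall := mul_g_mul_rpow_sub_one_le hp hpq hδ hC₀ hε hlam (le_add_of_nonneg_right hv)
    ht hη₀ hη₁
  linarith

end Absorption

/-- Key pointwise inequality (Lemma 3.1 of the paper): there are constants
`c₁, c₂ > 0` depending only on `p, q, δ, C₀` such that for all `v ≥ 0`,
`η ∈ [0,1]`, nonzero `ξ ∈ ℝⁿ`, and `e ∈ ℝⁿ` with `‖e‖ ≤ C₀/R`,
`(‖ξ‖^(p−2) + ‖ξ‖^(q−2)) ⟨ξ, Φ′(v)(ξ/R)η^q + qΦ(v)η^(q−1)e⟩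
  ≥ (c₁/R)(ḡ(λ)/ḡ(λ+v))^((δ−1)/(q−1)) (G(‖ξ‖)/(λ+v)) η^q
    − (c₂/R) ḡ(λ) (ḡ(λ+v)/ḡ(λ))^δ`. -/
theorem stmt13 (p q δ C₀ : ℝ) (hp : 1 < p) (hpq : p ≤ q) (hδ : 1 < δ) (hC₀ : 0 < C₀) :
    ∃ c₁ c₂ : ℝ, 0 < c₁ ∧ 0 < c₂ ∧
      ∀ (n : ℕ), 1 ≤ n →
      ∀ (lam R : ℝ), 0 < lam → 0 < R →
      ∀ (v : ℝ), 0 ≤ v →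
      ∀ (η : ℝ), η ∈ Set.Icc (0 : ℝ) 1 →
      ∀ (ξ e : EuclideanSpace ℝ (Fin n)), ξ ≠ 0 → ‖e‖ ≤ C₀ / R →
        (‖ξ‖ ^ (p - 2) + ‖ξ‖ ^ (q - 2)) *
            ⟪ξ, (deriv (Phi p q δ lam) v * η ^ q / R) • ξ +
                  (q * Phi p q δ lam v * η ^ (q - 1)) • e⟫ ≥
          c₁ / R * (gbar p q lam / gbar p q (lam + v)) ^ ((δ - 1) / (q - 1)) *
              (G p q ‖ξ‖ / (lam + v)) * η ^ q -
            c₂ / R * gbar p q lam * (gbar p q (lam + v) / gbar p q lam) ^ δ := by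
  have hq : 1 < q := hp.trans_le hpq
  set ε := (δ - 1) / (q - 1) * (p - 1) / 2
  have hε : 0 < ε :=
    div_pos (mul_pos (div_pos (by linarith) (by linarith)) (by linarith)) two_pos
  refine ⟨ε, q ^ 2 * C₀ + (q ^ 2 * C₀) ^ q / ε ^ (q - 1), hε, by positivity, ?_⟩
  rintro n - lam R hlam hR v hv η ⟨hη₀, hη₁⟩ ξ e hξ he
  have ht : 0 < ‖ξ‖ := norm_pos_iff.mpr hξ
  have hΦ := Phi_nonneg hp.le hpq hδ.le hlam hv
  have key := deriv_Phi_mul_sub_Phi_mul_ge hp hpq hδ.le hC₀.le hε (by simp only [ε]; linarith)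
    hlam hv ht hη₀ hη₁
  calc _ = (ε * ((gbar p q lam / gbar p q (lam + v)) ^ ((δ - 1) / (q - 1)) *
          (G p q ‖ξ‖ / (lam + v))) * η ^ q - (q ^ 2 * C₀ + (q ^ 2 * C₀) ^ q / ε ^ (q - 1)) *
            (gbar p q lam * (gbar p q (lam + v) / gbar p q lam) ^ δ)) / R := by ring
    _ ≤ (deriv (Phi p q δ lam) v * η ^ q * (g p q ‖ξ‖ * ‖ξ‖) -
          q * Phi p q δ lam v * η ^ (q - 1) * C₀ * g p q ‖ξ‖) / R :=
        div_le_div_of_nonneg_right key hR.le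
    _ = (‖ξ‖ ^ (p - 2) + ‖ξ‖ ^ (q - 2)) * (deriv (Phi p q δ lam) v * η ^ q / R * ‖ξ‖ ^ 2 -
          q * Phi p q δ lam v * η ^ (q - 1) * (‖ξ‖ * (C₀ / R))) := by
        rw [← rpow_sub_two_add_mul_self ht]; field_simp
    _ ≤ (‖ξ‖ ^ (p - 2) + ‖ξ‖ ^ (q - 2)) * (deriv (Phi p q δ lam) v * η ^ q / R * ‖ξ‖ ^ 2 -
          q * Phi p q δ lam v * η ^ (q - 1) * (‖ξ‖ * ‖e‖)) := by gcongr
    _ ≤ _ := by gcongr; exact sub_le_inner_smul_add_smul ξ e (by positivity)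
end
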